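/- arXiv:1401.6651 — 2 statements merged into one kernel-verified Lean document; each statement's English description precedes it below -/
import Mathlib

section
/- Let N ≥ 3, let λ be a nonzero real number, and let B = J_N(λ) be the N×N Jordan block with λ on the diagonal and 1 on the superdiagonal. Then for every integer L ≥ 0 and all nonzero real numbers u(0), u(1), …, u(L), the product (I + u(L)B)(I + u(L−1)B)⋯(I + u(1)B)(I + u(0)B) is not equal to the identity matrix. -/
open Matrix MeasureTheory Polynomial

/-- The product `(I + u(l-1)B) ⋯ (I + u(1)B)(I + u(0)B)`. -/
noncomputable def prodCtrl {n : ℕ} (B : Matrix (Fin n) (Fin n) ℝ) (l : ℕ) (u : ℕ → ℝ) :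
    Matrix (Fin n) (Fin n) ℝ :=
  ((List.range l).reverse.map fun k => (1 : Matrix (Fin n) (Fin n) ℝ) + u k • B).prod

/-- `ξ` can be steered to `η` in the system `x(k+1) = (I + u(k)B) x(k)`. -/
noncomputable def steers {n : ℕ} (B : Matrix (Fin n) (Fin n) ℝ) (ξ η : Fin n → ℝ) : Prop :=
  ∃ l : ℕ, 1 ≤ l ∧ ∃ u : ℕ → ℝ, (prodCtrl B l u).mulVec ξ = η

/-- Near-controllability: outside two Lebesgue-null sets, any state can be steered to any state. -/
noncomputable def nearlyControllable {n : ℕ} (B : Matrix (Fin n) (Fin n) ℝ) : Prop :=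
  ∃ E F : Set (Fin n → ℝ), volume E = 0 ∧ volume F = 0 ∧
    ∀ ξ ∉ E, ∀ η ∉ F, steers B ξ η

/-- The matrix `[ξ, Bξ, B²ξ, …, B^{n-1}ξ]`. -/
noncomputable def ctrlMat {n : ℕ} (B : Matrix (Fin n) (Fin n) ℝ) (ξ : Fin n → ℝ) :
    Matrix (Fin n) (Fin n) ℝ :=
  Matrix.of fun i j => (B ^ (j : ℕ)).mulVec ξ i

/-- The `N × N` Jordan block with eigenvalue `lam`. -/
def jordanBlock (N : ℕ) (lam : ℝ) : Matrix (Fin N) (Fin N) ℝ :=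
  Matrix.of fun i j => if i = j then lam else if (j : ℕ) = (i : ℕ) + 1 then 1 else 0

/-- Block-diagonal Jordan matrix: `r` two-dimensional Jordan blocks with eigenvalues
`lam 0, …, lam (r-1)` followed by `1 × 1` blocks `lam r, …, lam (m-1)` (so `n = m + r`). -/
def pairJordan (n r : ℕ) (lam : ℕ → ℝ) : Matrix (Fin n) (Fin n) ℝ :=
  Matrix.of fun i j =>
    if (i : ℕ) = (j : ℕ) then
      (if (i : ℕ) < 2 * r then lam ((i : ℕ) / 2) else lam ((i : ℕ) - r))
    else if (j : ℕ) = (i : ℕ) + 1 ∧ (i : ℕ) < 2 * r ∧ (i : ℕ) % 2 = 0 then 1 else 0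

/-!
Writing `B = λ I + J` with `J = J_N(0)` nilpotent, the product is `P(J)` for the real polynomial
`P = ∏ₖ (1 + u(k) λ + u(k) X)`, and the first row of `P(J)` lists the coefficients of `P`.
If the product were `I`, then `P` would have coefficients `1, 0, 0` in degrees `0, 1, 2`
(this needs `N ≥ 3`). But `D(p) = p₁² - 2 p₀ p₂` satisfies
`D(p · (a + b X)) = a² D(p) + b² p₀²`, so for a product of real linear factors `∏ (aₖ + bₖ X)`
it is a sum of squares, which vanishes with `p₀ ≠ 0` only if every `bₖ = 0`.
-/

namespace Polynomial

variable {R : Type*}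

def coeffDisc [CommRing R] (p : R[X]) : R := p.coeff 1 ^ 2 - 2 * p.coeff 0 * p.coeff 2

lemma coeffDisc_mul_linear [CommRing R] (p : R[X]) (a b : R) :
    coeffDisc (p * (C a + C b * X)) = a ^ 2 * coeffDisc p + b ^ 2 * p.coeff 0 ^ 2 := by
  have hcoeff (n : ℕ) :
      (p * (C a + C b * X)).coeff (n + 1) = a * p.coeff (n + 1) + b * p.coeff n := by
    rw [mul_add, ← mul_assoc, coeff_add, coeff_mul_C, coeff_mul_X, coeff_mul_C]
    ring
  have hcoeff0 : (p * (C a + C b * X)).coeff 0 = a * p.coeff 0 := by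
    simp [mul_comm (p.coeff 0)]
  simp only [coeffDisc, hcoeff, hcoeff0]
  ring

variable [CommRing R] [LinearOrder R] [IsStrictOrderedRing R]

lemma coeffDisc_prod_linear_nonneg (a b : ℕ → R) (n : ℕ) :
    0 ≤ coeffDisc (∏ k ∈ Finset.range n, (C (a k) + C (b k) * X)) := by
  induction n with
  | zero => simp [coeffDisc, coeff_one]
  | succ n ih =>
    rw [Finset.prod_range_succ, coeffDisc_mul_linear]
    positivity

lemma eq_zero_of_coeffDisc_prod_linear_eq_zero (a b : ℕ → R) (n : ℕ)
    (h0 : (∏ k ∈ Finset.range n, (C (a k) + C (b k) * X)).coeff 0 ≠ 0)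
    (hD : coeffDisc (∏ k ∈ Finset.range n, (C (a k) + C (b k) * X)) = 0) :
    ∀ k < n, b k = 0 := by
  induction n with
  | zero => simp
  | succ n ih =>
    rw [Finset.prod_range_succ] at h0 hD
    set Q := ∏ k ∈ Finset.range n, (C (a k) + C (b k) * X)
    obtain ⟨hQ0, ha⟩ : Q.coeff 0 ≠ 0 ∧ a n ≠ 0 := by simpa [mul_coeff_zero] using h0
    rw [coeffDisc_mul_linear] at hD
    obtain ⟨hDQ, hb⟩ := (add_eq_zero_iff_of_nonneg
      (mul_nonneg (sq_nonneg _) (coeffDisc_prod_linear_nonneg a b n)) (by positivity)).mp hD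
    replace hDQ : coeffDisc Q = 0 := by simpa [ha] using hDQ
    replace hb : b n = 0 := by simpa [hQ0] using hb
    intro k hk
    rcases Nat.lt_succ_iff_lt_or_eq.mp hk with hk | rfl
    · exact ih hQ0 hDQ k hk
    · exact hb

end Polynomial

lemma jordanBlock_zero_apply {N : ℕ} (a b : Fin N) :
    jordanBlock N 0 a b = if (b : ℕ) = a + 1 then 1 else 0 := by
  by_cases h : a = b
  · subst h; simp [jordanBlock]
  · simp [jordanBlock, h]

lemma jordanBlock_zero_pow_apply {N : ℕ} (i : ℕ) (a b : Fin N) :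
    (jordanBlock N 0 ^ i) a b = if (b : ℕ) = a + i then 1 else 0 := by
  induction i generalizing b with
  | zero => simp [Matrix.one_apply, Fin.ext_iff, eq_comm]
  | succ i ih =>
    rw [pow_succ, Matrix.mul_apply]
    simp only [ih, jordanBlock_zero_apply, mul_ite, mul_one, mul_zero]
    by_cases h : a + i < N
    · rw [Finset.sum_eq_single ⟨a + i, h⟩] <;> grind
    · rw [Finset.sum_eq_zero fun k _ => by grind]
      grind

lemma aeval_jordanBlock_zero_apply_zero {N : ℕ} (hN : 0 < N) (p : ℝ[X]) (j : Fin N) :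
    aeval (jordanBlock N 0) p ⟨0, hN⟩ j = p.coeff j := by
  rw [aeval_eq_sum_range, Matrix.sum_apply]
  simp only [Matrix.smul_apply, jordanBlock_zero_pow_apply, zero_add, smul_eq_mul, mul_ite,
    mul_one, mul_zero, Finset.sum_ite_eq, Finset.mem_range]
  split_ifs with h
  · rfl
  · exact (coeff_eq_zero_of_natDegree_lt (by omega)).symm

lemma jordanBlock_eq_aeval (N : ℕ) (lam : ℝ) :
    jordanBlock N lam = aeval (jordanBlock N 0) (C lam + X) := by
  ext i j
  by_cases h : i = j
  · subst h; simp [jordanBlock, Matrix.algebraMap_matrix_apply]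
  · simp [jordanBlock, Matrix.algebraMap_matrix_apply, h]

lemma prodCtrl_eq_aeval {n : ℕ} (B : Matrix (Fin n) (Fin n) ℝ) (l : ℕ) (u : ℕ → ℝ) :
    prodCtrl B l u = aeval B (∏ k ∈ Finset.range l, (1 + C (u k) * X)) := by
  induction l with
  | zero => simp [prodCtrl]
  | succ l ih =>
    have hsucc : prodCtrl B (l + 1) u = (1 + u l • B) * prodCtrl B l u := by
      simp [prodCtrl, List.range_succ]
    rw [hsucc, ih, Finset.prod_range_succ, mul_comm _ (1 + _), map_mul]
    simp [Algebra.smul_def]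

lemma prodCtrl_jordanBlock (N : ℕ) (lam : ℝ) (l : ℕ) (u : ℕ → ℝ) :
    prodCtrl (jordanBlock N lam) l u =
      aeval (jordanBlock N 0) (∏ k ∈ Finset.range l, (C (1 + u k * lam) + C (u k) * X)) := by
  rw [prodCtrl_eq_aeval, jordanBlock_eq_aeval, ← aeval_comp, prod_comp]
  congr 1
  refine Finset.prod_congr rfl fun k _ => ?_
  simp only [add_comp, one_comp, mul_comp, C_comp, X_comp, C_add, C_1, C_mul]
  ring

theorem stmt2_general {N : ℕ} (hN : 3 ≤ N) (lam : ℝ) :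
    ∀ (L : ℕ) (u : ℕ → ℝ), (∀ k ≤ L, u k ≠ 0) →
      prodCtrl (jordanBlock N lam) (L + 1) u ≠ 1 := by
  intro L u hu hprod
  set P := ∏ k ∈ Finset.range (L + 1), (C (1 + u k * lam) + C (u k) * X) with hP
  have hcoeff (j : ℕ) (hj : j < N) : P.coeff j = if j = 0 then 1 else 0 := by
    rw [← aeval_jordanBlock_zero_apply_zero (by omega) P ⟨j, hj⟩, hP, ← prodCtrl_jordanBlock,
      hprod, Matrix.one_apply]
    simp [Fin.ext_iff, eq_comm]
  have hP0 : P.coeff 0 ≠ 0 := by simp [hcoeff 0 (by omega)]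
  have hdisc : coeffDisc P = 0 := by
    simp [coeffDisc, hcoeff 1 (by omega), hcoeff 2 (by omega)]
  exact hu 0 L.zero_le (eq_zero_of_coeffDisc_prod_linear_eq_zero _ _ _ hP0 hdisc 0 L.succ_pos)

/-- for a Jordan block of size `N ≥ 3` with nonzero eigenvalue, no product
`(I + u(L)B)⋯(I + u(0)B)` with all `u(k)` nonzero equals the identity. -/
theorem stmt2 {N : ℕ} (hN : 3 ≤ N) (lam : ℝ) (hlam : lam ≠ 0) :
    ∀ (L : ℕ) (u : ℕ → ℝ), (∀ k ≤ L, u k ≠ 0) →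
      prodCtrl (jordanBlock N lam) (L + 1) u ≠ 1 :=
  stmt2_general hN lam
end

section
/- Let n ≥ 3, let λ be a nonzero real number, and let B = J_n(λ) be the n×n Jordan block with λ on the diagonal and 1 on the superdiagonal. Then the system x(k+1) = (I + u(k)B)x(k) is not nearly controllable. -/
open Matrix MeasureTheory Polynomial

/-!
Read the last three coordinates `x_{n-1}, x_{n-2}, x_{n-3}` of a state as the coefficients
`p₀, p₁, p₂` of a polynomial modulo `X³`. Then `I + u J_n(λ)` acts on them as multiplication by
`a + uX` with `a = 1 + uλ`, so `p₀ ↦ a p₀` and `w = p₁² - 2 p₀ p₂` (`tailDisc`) becomes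
`a² w + u² p₀²`. Hence the inequality `η₀² w(ξ) ≤ ξ₀² w(η)` holds for every `η` reachable from `ξ`.
For `ξ₀ ≠ 0`, which holds off a null set, the states violating it form a nonempty open set, which
cannot lie in a null set.
-/

lemma prodCtrl_succ {n : ℕ} (B : Matrix (Fin n) (Fin n) ℝ) (l : ℕ) (u : ℕ → ℝ) :
    prodCtrl B (l + 1) u = (1 + u l • B) * prodCtrl B l u := by
  simp [prodCtrl, List.range_succ]

lemma one_add_smul_mulVec {N : ℕ} (u : ℝ) (B : Matrix (Fin N) (Fin N) ℝ) (x : Fin N → ℝ) :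
    (1 + u • B) *ᵥ x = x + u • (B *ᵥ x) := by
  rw [add_mulVec, one_mulVec, smul_mulVec]

section JordanBlock

variable {N : ℕ} (lam : ℝ) (x : Fin N → ℝ)

lemma jordanBlock_mulVec_apply_of_val_eq_succ {i j : Fin N} (hij : (j : ℕ) = i + 1) :
    (jordanBlock N lam *ᵥ x) i = lam * x i + x j := by
  have hne : i ≠ j := by rintro rfl; omega
  rw [mulVec, dotProduct, Finset.sum_eq_add i j hne]
  · simp [jordanBlock, hne, hij]
  · intro k _ hk
    have hki : (k : ℕ) ≠ i + 1 := fun h => hk.2 (Fin.ext (by omega))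
    simp [jordanBlock, Ne.symm hk.1, hki]
  · simp
  · simp

lemma jordanBlock_mulVec_apply_of_val_succ_eq {i : Fin N} (hi : (i : ℕ) + 1 = N) :
    (jordanBlock N lam *ᵥ x) i = lam * x i := by
  rw [mulVec, dotProduct, Finset.sum_eq_single i]
  · simp [jordanBlock]
  · intro k _ hk
    simp [jordanBlock, Ne.symm hk, show (k : ℕ) ≠ i + 1 by omega]
  · simp

end JordanBlock

section TailDiscriminant

variable {m : ℕ}

def tailDisc (x : Fin (m + 3) → ℝ) : ℝ :=
  x ⟨m + 1, by omega⟩ ^ 2 - 2 * x (Fin.last (m + 2)) * x ⟨m, by omega⟩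

lemma continuous_tailDisc : Continuous (tailDisc (m := m)) := by
  unfold tailDisc; fun_prop

variable (lam u : ℝ) (x : Fin (m + 3) → ℝ)

lemma one_add_smul_jordanBlock_mulVec_apply_last :
    ((1 + u • jordanBlock (m + 3) lam) *ᵥ x) (Fin.last (m + 2)) =
      (1 + u * lam) * x (Fin.last (m + 2)) := by
  rw [one_add_smul_mulVec]
  simp only [Pi.add_apply, Pi.smul_apply, smul_eq_mul]
  rw [jordanBlock_mulVec_apply_of_val_succ_eq lam x (by simp)]
  ring

lemma tailDisc_one_add_smul_jordanBlock_mulVec :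
    tailDisc ((1 + u • jordanBlock (m + 3) lam) *ᵥ x) =
      (1 + u * lam) ^ 2 * tailDisc x + (u * x (Fin.last (m + 2))) ^ 2 := by
  simp only [tailDisc, one_add_smul_mulVec, Pi.add_apply, Pi.smul_apply, smul_eq_mul]
  rw [jordanBlock_mulVec_apply_of_val_succ_eq lam x (i := Fin.last (m + 2)) (by simp),
    jordanBlock_mulVec_apply_of_val_eq_succ lam x
      (i := ⟨m + 1, by omega⟩) (j := Fin.last (m + 2)) rfl,
    jordanBlock_mulVec_apply_of_val_eq_succ lam x
      (i := ⟨m, by omega⟩) (j := ⟨m + 1, by omega⟩) rfl]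
  ring

lemma sq_apply_last_mul_tailDisc_le_of_steers {ξ η : Fin (m + 3) → ℝ}
    (h : steers (jordanBlock (m + 3) lam) ξ η) :
    η (Fin.last (m + 2)) ^ 2 * tailDisc ξ ≤ ξ (Fin.last (m + 2)) ^ 2 * tailDisc η := by
  obtain ⟨l, -, u, rfl⟩ := h
  induction l with
  | zero => simp [prodCtrl, mul_comm]
  | succ l ih =>
    rw [prodCtrl_succ, ← mulVec_mulVec, one_add_smul_jordanBlock_mulVec_apply_last,
      tailDisc_one_add_smul_jordanBlock_mulVec]
    nlinarith [mul_le_mul_of_nonneg_left ih (sq_nonneg (1 + u l * lam))]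

lemma exists_tailDisc_lt {ξ : Fin (m + 3) → ℝ} (hξ : ξ (Fin.last (m + 2)) ≠ 0) :
    ∃ η : Fin (m + 3) → ℝ,
      ξ (Fin.last (m + 2)) ^ 2 * tailDisc η < η (Fin.last (m + 2)) ^ 2 * tailDisc ξ := by
  refine ⟨ξ + Pi.single ⟨m, by omega⟩ (ξ (Fin.last (m + 2))), ?_⟩
  have h1 : (⟨m + 1, by omega⟩ : Fin (m + 3)) ≠ ⟨m, by omega⟩ := by simp
  have h2 : Fin.last (m + 2) ≠ ⟨m, by omega⟩ := by simp [Fin.ext_iff]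
  simp only [tailDisc, Pi.add_apply, Pi.single_eq_same, Pi.single_eq_of_ne h1,
    Pi.single_eq_of_ne h2]
  nlinarith [pow_pos (sq_pos_of_ne_zero hξ) 2]

end TailDiscriminant

lemma exists_notMem_apply_ne_zero {ι : Type*} [Fintype ι] {E : Set (ι → ℝ)} (hE : volume E = 0)
    (i : ι) : ∃ x ∉ E, x i ≠ 0 := by
  have hE' : ∀ᵐ x ∂volume, x ∉ E := measure_eq_zero_iff_ae_notMem.1 hE
  have hi : ∀ᵐ x : ι → ℝ ∂volume, x i ≠ 0 := by
    rw [volume_pi]; exact Measure.ae_eval_ne _ i 0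
  exact (hE'.and hi).exists

theorem stmt14_general {n : ℕ} (hn : 3 ≤ n) (lam : ℝ) :
    ¬ nearlyControllable (jordanBlock n lam) := by
  obtain ⟨m, rfl⟩ : ∃ m, n = m + 3 := ⟨n - 3, by omega⟩
  rintro ⟨E, F, hE, hF, hsteers⟩
  obtain ⟨ξ, hξE, hξ⟩ := exists_notMem_apply_ne_zero hE (Fin.last (m + 2))
  set U := {η : Fin (m + 3) → ℝ |
    ξ (Fin.last (m + 2)) ^ 2 * tailDisc η < η (Fin.last (m + 2)) ^ 2 * tailDisc ξ}
  have hU : IsOpen U :=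
    isOpen_lt (continuous_const.mul continuous_tailDisc)
      (((continuous_apply _).pow 2).mul continuous_const)
  have hUF : U ⊆ F := fun η hη => by_contra fun hηF =>
    (sq_apply_last_mul_tailDisc_le_of_steers lam (hsteers ξ hξE η hηF)).not_gt hη
  exact hU.measure_ne_zero volume (exists_tailDisc_lt hξ) (measure_mono_null hUF hF)

/-- for `n ≥ 3` and `λ ≠ 0`, the system built on the Jordan block `J_n(λ)`
is not nearly controllable. -/
theorem stmt14 {n : ℕ} (hn : 3 ≤ n) (lam : ℝ) (hlam : lam ≠ 0) :
    ¬ nearlyControllable (jordanBlock n lam) :=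
  stmt14_general hn lam
end
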